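/- arXiv:1702.02721 — 9 statements merged into one kernel-verified Lean document; each statement's English description precedes it below -/
import Mathlib

section
/- Let ι be a finite index type, and for each i ∈ ι let Mᵢ : D → (probability measures on Rᵢ) be an εᵢ-differentially private mechanism. Then the product mechanism M defined by M(x) := the product probability measure ⊗ᵢ Mᵢ(x) on Πᵢ Rᵢ (with the product σ-algebra) is (Σᵢ εᵢ)-differentially private: for all neighbors x, x' ∈ D and every measurable set S ⊆ Πᵢ Rᵢ, M(x)(S) ≤ exp(Σᵢ εᵢ) · M(x')(S). -/
open MeasureTheory ENNReal

section Aux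

variable {ι : Type*} [Fintype ι] {α : ι → Type*} [∀ i, MeasurableSpace (α i)]

theorem pi_mono_aux (μ ν : ∀ i, Measure (α i)) (h : ∀ i, μ i ≤ ν i)
    (S : Set (∀ i, α i)) (hS : MeasurableSet S) :
    Measure.pi μ S ≤ Measure.pi ν S := by
  rw [Measure.pi_def, Measure.pi_def, toMeasure_apply _ _ hS,
    toMeasure_apply _ _ hS]
  refine (OuterMeasure.le_boundedBy.2 fun s => ?_) S
  refine (OuterMeasure.boundedBy_le (m := piPremeasure fun i => (μ i).toOuterMeasure) s).trans ?_
  exact Finset.prod_le_prod' fun i _ => h i _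

theorem pi_smul_aux (c : ι → ℝ≥0∞) (hc : ∀ i, c i ≠ ⊤)
    (ν : ∀ i, Measure (α i)) [∀ i, IsProbabilityMeasure (ν i)] :
    Measure.pi (fun i => c i • ν i) = (∏ i, c i) • Measure.pi ν := by
  have : ∀ i, IsFiniteMeasure (c i • ν i) := fun i => by
    constructor
    simp only [Measure.smul_apply, Set.univ, smul_eq_mul]
    exact ENNReal.mul_lt_top (hc i).lt_top (measure_lt_top (ν i) _)
  refine (Measure.pi_eq fun s hs => ?_)
  simp only [Measure.smul_apply, smul_eq_mul, Measure.pi_pi, Finset.prod_mul_distrib]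

end Aux

/-- Composition privacy: if for each `i` in a finite index type the mechanism
`M i : D → Measure (R i)` is `ε i`-differentially private, then the product
mechanism `x ↦ ⊗ᵢ M i x` is `(∑ i, ε i)`-differentially private. -/
theorem stmt_1 {D : Type*} [PseudoMetricSpace D] {ι : Type*} [Fintype ι]
    {R : ι → Type*} [∀ i, MeasurableSpace (R i)]
    (M : ∀ i, D → Measure (R i)) [∀ i x, IsProbabilityMeasure (M i x)]
    (ε : ι → ℝ) (hε : ∀ i, 0 < ε i)
    (hdp : ∀ i, ∀ x x' : D, 0 < dist x x' → dist x x' ≤ 1 →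
      ∀ S : Set (R i), MeasurableSet S →
        M i x S ≤ ENNReal.ofReal (Real.exp (ε i)) * M i x' S) :
    ∀ x x' : D, 0 < dist x x' → dist x x' ≤ 1 →
      ∀ S : Set (∀ i, R i), MeasurableSet S →
        Measure.pi (fun i => M i x) S ≤
          ENNReal.ofReal (Real.exp (∑ i, ε i)) * Measure.pi (fun i => M i x') S := by
  intro x x' h1 h2 S hS
  set c : ι → ℝ≥0∞ := fun i => ENNReal.ofReal (Real.exp (ε i)) with hc
  have hle : ∀ i, M i x ≤ c i • M i x' := fun i =>
    Measure.le_iff.2 fun s hs => by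
      simpa [Measure.smul_apply, smul_eq_mul] using hdp i x x' h1 h2 s hs
  have key := pi_mono_aux (fun i => M i x) (fun i => c i • M i x') hle S hS
  rw [pi_smul_aux c (fun i => ENNReal.ofReal_ne_top) (fun i => M i x')] at key
  refine key.trans_eq ?_
  rw [Measure.smul_apply, smul_eq_mul]
  congr 1
  rw [hc, ← ENNReal.ofReal_prod_of_nonneg fun i _ => (Real.exp_pos _).le, Real.exp_sum]
end

section
/- If the discrete mechanism p is ε-differentially private, then its discretization q satisfies 2ε-differential privacy: for all neighbors x, x' ∈ D and every r ∈ 𝓡, qˣ(r) ≤ exp(2ε) · q^{x'}(r). -/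
/-- The `i`-th layer of the probability distribution `p x`:
`R_i^x = {r | M exp(-(i+1)ε) < p x r ≤ M exp(-i ε)}`. -/
def layerSet {D R : Type*} (p : D → R → ℝ) (ε M : ℝ) (x : D) (i : ℕ) : Set R :=
  {r | M * Real.exp (-((i : ℝ) + 1) * ε) < p x r ∧ p x r ≤ M * Real.exp (-(i : ℝ) * ε)}

/-- `A_j^x`, the union of the layers of index `≤ j`. -/
def cumSet {D R : Type*} (p : D → R → ℝ) (ε M : ℝ) (x : D) (j : ℕ) : Set R :=
  ⋃ k ≤ j, layerSet p ε M x k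

/-- `ε`-differential privacy of a discrete mechanism: for all neighbors `x, x'`
(i.e. `0 < d̄(x,x') ≤ 1`) and all `r`, `p x r ≤ exp ε * p x' r`. -/
def IsDP {D R : Type*} [PseudoMetricSpace D] (p : D → R → ℝ) (ε : ℝ) : Prop :=
  ∀ x x' : D, 0 < dist x x' → dist x x' ≤ 1 → ∀ r : R, p x r ≤ Real.exp ε * p x' r

/-- If the discrete mechanism `p` is `ε`-differentially private, then its
discretization `q x r = exp(-(L x r) ε) / α x` satisfies `2ε`-differential
privacy. -/
theorem stmt_3 {D R : Type*} [MetricSpace D] [MetricSpace R] [Countable R]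
    (p : D → R → ℝ) (ε : ℝ) (hε : 0 < ε)
    (hpos : ∀ (x : D) (r : R), 0 < p x r) (hsum1 : ∀ x : D, HasSum (p x) 1)
    (M : ℝ) (hMpos : 0 < M)
    (hM : IsLUB {v : ℝ | ∃ (x : D) (r : R), v = p x r} M)
    (hdp : IsDP p ε)
    (L : D → R → ℕ) (hL : ∀ (x : D) (r : R), r ∈ layerSet p ε M x (L x r))
    (α : D → ℝ) (hα : ∀ x : D, HasSum (fun r : R => Real.exp (-(L x r : ℝ) * ε)) (α x))
    (hαpos : ∀ x : D, 0 < α x) :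
    ∀ x x' : D, 0 < dist x x' → dist x x' ≤ 1 → ∀ r : R,
      Real.exp (-(L x r : ℝ) * ε) / α x ≤
        Real.exp (2 * ε) * (Real.exp (-(L x' r : ℝ) * ε) / α x') := by
  intro x x' hd0 hd1 r
  -- key: layer indices of neighbors differ by at most 1
  have hlayer : ∀ y y' : D, (∀ s : R, p y s ≤ Real.exp ε * p y' s) →
      ∀ s : R, (L y' s : ℝ) ≤ (L y s : ℝ) + 1 := by
    intro y y' hdp' s
    by_contra hcon
    push_neg at hcon
    have hij : (L y s : ℝ) + 2 ≤ (L y' s : ℝ) := by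
      have : (L y s : ℕ) + 1 < L y' s := by exact_mod_cast hcon
      have : (L y s : ℕ) + 2 ≤ L y' s := this
      exact_mod_cast this
    obtain ⟨h1, _⟩ := hL y s
    obtain ⟨_, h2⟩ := hL y' s
    have hchain : p y s ≤ M * Real.exp (-((L y s : ℝ) + 1) * ε) := by
      calc p y s ≤ Real.exp ε * p y' s := hdp' s
        _ ≤ Real.exp ε * (M * Real.exp (-(L y' s : ℝ) * ε)) := by
            have := Real.exp_pos ε; nlinarith [h2]
        _ = M * Real.exp ((1 - (L y' s : ℝ)) * ε) := by
            rw [mul_left_comm, ← Real.exp_add]; ring_nf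
        _ ≤ M * Real.exp (-((L y s : ℝ) + 1) * ε) := by
            have : (1 - (L y' s : ℝ)) * ε ≤ -((L y s : ℝ) + 1) * ε := by nlinarith
            nlinarith [Real.exp_le_exp.mpr this, Real.exp_pos ((1 - (L y' s : ℝ)) * ε)]
    linarith
  have hdp1 : ∀ s : R, p x s ≤ Real.exp ε * p x' s := hdp x x' hd0 hd1
  have hdp2 : ∀ s : R, p x' s ≤ Real.exp ε * p x s := by
    have h0 : 0 < dist x' x := by rwa [dist_comm]
    have h1 : dist x' x ≤ 1 := by rwa [dist_comm]
    exact hdp x' x h0 h1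
  have hle1 : (L x' r : ℝ) ≤ (L x r : ℝ) + 1 := hlayer x x' hdp1 r
  -- exponent bound
  have eA : Real.exp (-(L x r : ℝ) * ε) ≤ Real.exp ε * Real.exp (-(L x' r : ℝ) * ε) := by
    rw [← Real.exp_add, Real.exp_le_exp]
    nlinarith
  -- α bound : α x' ≤ exp ε * α x
  have eα : α x' ≤ Real.exp ε * α x := by
    have hs : HasSum (fun s : R => Real.exp ε * Real.exp (-(L x s : ℝ) * ε)) (Real.exp ε * α x) :=
      (hα x).mul_left _
    refine hasSum_le (fun s => ?_) (hα x') hs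
    have hle2 : (L x s : ℝ) ≤ (L x' s : ℝ) + 1 := hlayer x' x hdp2 s
    rw [← Real.exp_add, Real.exp_le_exp]
    nlinarith
  have hαx := hαpos x
  have hαx' := hαpos x'
  have hεpos := Real.exp_pos ε
  calc Real.exp (-(L x r : ℝ) * ε) / α x
      ≤ (Real.exp ε * Real.exp (-(L x' r : ℝ) * ε)) / α x := by gcongr
    _ ≤ (Real.exp ε * Real.exp (-(L x' r : ℝ) * ε)) / (α x' / Real.exp ε) := by
        have hq : 0 < α x' / Real.exp ε := by positivity
        gcongr
        rw [div_le_iff₀ hεpos]; linarith [eα]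
    _ = Real.exp (2 * ε) * (Real.exp (-(L x' r : ℝ) * ε) / α x') := by
        rw [two_mul, Real.exp_add]
        field_simp
end

section
/- Suppose the discrete mechanism p is ε-differentially private and the dataset metric space has the path property: for all x, y ∈ D and every k ∈ ℕ with k < d̄(x,y) ≤ k+1, there exists x' ∈ D with 0 < d̄(x,x') ≤ 1 and d̄(x',y) ≤ k. Then for every x ∈ D and every i ∈ ℕ, Aᵢˣ ⊇ ∪_{y∈D : d̄(x,y) ≤ i} R₀ʸ, where Aⱼˣ := ∪_{k≤j} Rₖˣ. -/
open Real

def PathProperty (D : Type*) [PseudoMetricSpace D] : Prop :=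
  ∀ x y : D, ∀ k : ℕ, (k : ℝ) < dist x y → dist x y ≤ (k : ℝ) + 1 →
    ∃ x' : D, 0 < dist x x' ∧ dist x x' ≤ 1 ∧ dist x' y ≤ (k : ℝ)

theorem IsDP.le_exp_mul_of_dist_le {D R : Type*} [MetricSpace D] {p : D → R → ℝ} {ε : ℝ}
    (hdp : IsDP p ε) (hpath : PathProperty D) (hε : 0 ≤ ε) (hp : ∀ x r, 0 ≤ p x r) (r : R) :
    ∀ (k : ℕ) (x y : D), dist x y ≤ k → p y r ≤ exp (k * ε) * p x r := by
  intro k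
  induction k with
  | zero =>
    intro x y hxy
    obtain rfl : x = y := dist_le_zero.mp (by exact_mod_cast hxy)
    simp
  | succ k ih =>
    intro x y hxy
    by_cases hk : dist x y ≤ k
    · calc p y r ≤ exp (k * ε) * p x r := ih x y hk
        _ ≤ exp ((k + 1 : ℕ) * ε) * p x r := by
          gcongr
          · exact hp x r
          · exact_mod_cast Nat.le_succ k
    · obtain ⟨x', hx'x, hx'x_le, hx'y⟩ :=
        hpath x y k (not_le.mp hk) (by exact_mod_cast hxy)
      have hstep : p x' r ≤ exp ε * p x r :=
        hdp x' x (by rwa [dist_comm]) (by rwa [dist_comm]) r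
      calc p y r ≤ exp (k * ε) * p x' r := ih x' y hx'y
        _ ≤ exp (k * ε) * (exp ε * p x r) := by gcongr
        _ = exp ((k + 1 : ℕ) * ε) * p x r := by
          rw [← mul_assoc, ← exp_add]; push_cast; ring_nf

theorem mem_cumSet_of_le_of_lt {D R : Type*} {p : D → R → ℝ} {ε M : ℝ} {x : D} {r : R}
    {i : ℕ} (hle : p x r ≤ M) (hlt : M * exp (-((i : ℝ) + 1) * ε) < p x r) :
    r ∈ cumSet p ε M x i := by
  classical
  have hex : ∃ k : ℕ, M * exp (-((k : ℝ) + 1) * ε) < p x r := ⟨i, hlt⟩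
  -- The layer of `r` is the first `k` whose lower threshold `M e^{-(k+1)ε}` lies below `p x r`.
  have hupper : p x r ≤ M * exp (-(Nat.find hex : ℝ) * ε) := by
    cases hk : Nat.find hex with
    | zero => simpa using hle
    | succ m =>
      have hm := Nat.find_min hex (by omega : m < Nat.find hex)
      push_cast
      convert not_lt.mp hm using 4
  exact Set.mem_biUnion (Nat.find_le hlt) ⟨Nat.find_spec hex, hupper⟩

theorem stmt_7_general {D R : Type*} [MetricSpace D]
    (p : D → R → ℝ) (ε : ℝ) (hε : 0 < ε)
    (hpos : ∀ (x : D) (r : R), 0 < p x r)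
    (M : ℝ)
    (hM : IsLUB {v : ℝ | ∃ (x : D) (r : R), v = p x r} M)
    (hdp : IsDP p ε)
    (hpath : ∀ x y : D, ∀ k : ℕ, (k : ℝ) < dist x y → dist x y ≤ (k : ℝ) + 1 →
      ∃ x' : D, 0 < dist x x' ∧ dist x x' ≤ 1 ∧ dist x' y ≤ (k : ℝ)) :
    ∀ x : D, ∀ i : ℕ,
      (⋃ y ∈ {y : D | dist x y ≤ (i : ℝ)}, layerSet p ε M y 0) ⊆ cumSet p ε M x i := by
  intro x i r hr
  simp only [Set.mem_iUnion, Set.mem_ofPred_eq] at hr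
  obtain ⟨y, hxy, htop, -⟩ := hr
  have hchain : p y r ≤ exp (i * ε) * p x r :=
    hdp.le_exp_mul_of_dist_le hpath hε.le (fun x r ↦ (hpos x r).le) r i x y hxy
  refine mem_cumSet_of_le_of_lt (hM.1 ⟨x, r, rfl⟩) ?_
  calc M * exp (-((i : ℝ) + 1) * ε) = M * exp (-((0 : ℕ) + 1 : ℝ) * ε) * exp (-(i * ε)) := by
        rw [mul_assoc, ← exp_add]; push_cast; ring_nf
    _ < p y r * exp (-(i * ε)) := by gcongr
    _ ≤ p x r := by
        rw [← le_div_iff₀ (exp_pos _), exp_neg, div_inv_eq_mul, mul_comm]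
        exact hchain

/-- If the discrete mechanism `p` is `ε`-differentially private and the dataset
metric space has the path property, then for every `x` and `i`,
`A_i^x ⊇ ∪_{y : d̄(x,y) ≤ i} R_0^y`. -/
theorem stmt_7 {D R : Type*} [MetricSpace D] [MetricSpace R] [Countable R]
    (p : D → R → ℝ) (ε : ℝ) (hε : 0 < ε)
    (hpos : ∀ (x : D) (r : R), 0 < p x r) (hsum1 : ∀ x : D, HasSum (p x) 1)
    (M : ℝ) (hMpos : 0 < M)
    (hM : IsLUB {v : ℝ | ∃ (x : D) (r : R), v = p x r} M)
    (hdp : IsDP p ε)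
    (hpath : ∀ x y : D, ∀ k : ℕ, (k : ℝ) < dist x y → dist x y ≤ (k : ℝ) + 1 →
      ∃ x' : D, 0 < dist x x' ∧ dist x x' ≤ 1 ∧ dist x' y ≤ (k : ℝ)) :
    ∀ x : D, ∀ i : ℕ,
      (⋃ y ∈ {y : D | dist x y ≤ (i : ℝ)}, layerSet p ε M y 0) ⊆ cumSet p ε M x i :=
  stmt_7_general p ε hε hpos M hM hdp hpath
end

section
/- Let {R₀ˣ : x ∈ D} be an initial family of subsets of 𝓡 and let {Rᵢˣ} be the basic set sequence it generates. Assume the path property: for all x, y ∈ D and every k ∈ ℕ with k < d̄(x,y) ≤ k+1, there exists x' ∈ D with 0 < d̄(x,x') ≤ 1 and d̄(x',y) ≤ k. Then for every x ∈ D and every integer i ≥ 1, Rᵢˣ = (∪_{x'∈D : 0 < d̄(x,x') ≤ 1} R_{i−1}^{x'}) \ A_{i−1}ˣ, where Aⱼˣ := ∪_{k≤j} Rₖˣ. -/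
/-- The basic set sequence generated by an initial family `R0 : D → Set 𝓡`:
`R_0^x = R0 x` and, for `i ≥ 1`,
`R_i^x = (∪_{y : i−1 < d̄(x,y) ≤ i} R0 y) \ A_{i−1}^x` where `A_j^x = ∪_{k ≤ j} R_k^x`. -/
def basicSeq {D 𝓡 : Type*} [PseudoMetricSpace D] (R0 : D → Set 𝓡) (x : D) : ℕ → Set 𝓡
  | 0 => R0 x
  | i + 1 =>
      (⋃ y ∈ {y : D | (i : ℝ) < dist x y ∧ dist x y ≤ (i : ℝ) + 1}, R0 y) \
        ⋃ k ≤ i, basicSeq R0 x k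

theorem accum_eq {D 𝓡 : Type*} [MetricSpace D] (R0 : D → Set 𝓡) (x : D) :
    ∀ j : ℕ, (⋃ k ≤ j, basicSeq R0 x k) = ⋃ y ∈ {y : D | dist x y ≤ (j : ℝ)}, R0 y := by
  intro j
  induction j with
  | zero =>
    ext r
    simp only [Set.mem_iUnion, Set.mem_setOf_eq, Nat.le_zero, Nat.cast_zero]
    constructor
    · rintro ⟨k, rfl, hr⟩
      rw [basicSeq] at hr
      exact ⟨x, by simp, hr⟩
    · rintro ⟨y, hy, hr⟩
      have hxy : x = y := dist_le_zero.mp hy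
      exact ⟨0, rfl, by rw [basicSeq, hxy]; exact hr⟩
  | succ j ih =>
    have h1 : (⋃ k ≤ j + 1, basicSeq R0 x k)
        = (⋃ k ≤ j, basicSeq R0 x k) ∪ basicSeq R0 x (j + 1) := by
      ext r
      simp only [Set.mem_iUnion, Set.mem_union]
      constructor
      · rintro ⟨k, hk, hr⟩
        rcases Nat.lt_or_ge k (j + 1) with h | h
        · exact Or.inl ⟨k, Nat.lt_succ_iff.mp h, hr⟩
        · have : k = j + 1 := by omega
          exact Or.inr (this ▸ hr)
      · rintro (⟨k, hk, hr⟩ | hr)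
        · exact ⟨k, le_trans hk (Nat.le_succ j), hr⟩
        · exact ⟨j + 1, le_refl _, hr⟩
    rw [h1]
    conv_lhs => rw [basicSeq]
    rw [Set.union_diff_self, ih]
    ext r
    simp only [Set.mem_union, Set.mem_iUnion, Set.mem_setOf_eq]
    constructor
    · rintro (⟨y, hy, hr⟩ | ⟨y, ⟨_, hy2⟩, hr⟩)
      · exact ⟨y, by push_cast; linarith, hr⟩
      · exact ⟨y, by push_cast; linarith, hr⟩
    · rintro ⟨y, hy, hr⟩
      rcases le_or_gt (dist x y) (j : ℝ) with h | h
      · exact Or.inl ⟨y, h, hr⟩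
      · exact Or.inr ⟨y, ⟨h, by push_cast at hy ⊢; linarith⟩, hr⟩

/-- Under the path property of the dataset metric space, the basic set sequence
satisfies the recursion
`R_i^x = (∪_{x' : 0 < d̄(x,x') ≤ 1} R_{i−1}^{x'}) \ A_{i−1}^x` for `i ≥ 1`. -/
theorem stmt_11 {D 𝓡 : Type*} [MetricSpace D] (R0 : D → Set 𝓡)
    (hpath : ∀ x y : D, ∀ k : ℕ, (k : ℝ) < dist x y → dist x y ≤ (k : ℝ) + 1 →
      ∃ x' : D, 0 < dist x x' ∧ dist x x' ≤ 1 ∧ dist x' y ≤ (k : ℝ)) :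
    ∀ x : D, ∀ i : ℕ, 1 ≤ i →
      basicSeq R0 x i =
        (⋃ x' ∈ {x' : D | 0 < dist x x' ∧ dist x x' ≤ 1}, basicSeq R0 x' (i - 1)) \
          ⋃ k ≤ i - 1, basicSeq R0 x k := by
  intro x i hi
  obtain ⟨k, rfl⟩ : ∃ k, i = k + 1 := ⟨i - 1, by omega⟩
  have hk1 : k + 1 - 1 = k := rfl
  rw [hk1]
  conv_lhs => rw [basicSeq]
  ext r
  simp only [Set.mem_diff, Set.mem_iUnion, Set.mem_setOf_eq]
  constructor
  · rintro ⟨⟨y, ⟨hy1, hy2⟩, hr⟩, hnot⟩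
    obtain ⟨x', hd0, hd1, hdy⟩ := hpath x y k hy1 hy2
    -- r ∈ A_k^{x'}
    have hrA : r ∈ ⋃ m ≤ k, basicSeq R0 x' m := by
      rw [accum_eq]
      exact Set.mem_biUnion (by exact hdy : y ∈ {z : D | dist x' z ≤ (k : ℝ)}) hr
    simp only [Set.mem_iUnion] at hrA
    obtain ⟨m, hm, hrm⟩ := hrA
    have hmk : m = k := by
      by_contra hne
      have hmk' : m ≤ k - 1 := by omega
      have hk1' : 1 ≤ k := by omega
      have : r ∈ ⋃ m' ≤ k - 1, basicSeq R0 x' m' := by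
        exact Set.mem_biUnion hmk' hrm
      rw [accum_eq] at this
      simp only [Set.mem_iUnion, Set.mem_setOf_eq] at this
      obtain ⟨z, hz, hrz⟩ := this
      have hcast : ((k - 1 : ℕ) : ℝ) = (k : ℝ) - 1 := by
        push_cast [hk1']; ring
      have hxz : dist x z ≤ (k : ℝ) := by
        calc dist x z ≤ dist x x' + dist x' z := dist_triangle _ _ _
        _ ≤ 1 + ((k : ℝ) - 1) := by rw [hcast] at hz; linarith
        _ = (k : ℝ) := by ring
      apply hnot
      have : r ∈ ⋃ y ∈ {y : D | dist x y ≤ (k : ℝ)}, R0 y :=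
        Set.mem_biUnion (by exact hxz : z ∈ {z : D | dist x z ≤ (k : ℝ)}) hrz
      rw [← accum_eq] at this
      simpa using this
    subst hmk
    exact ⟨⟨x', ⟨hd0, hd1⟩, hrm⟩, hnot⟩
  · rintro ⟨⟨x', ⟨hd0, hd1⟩, hr⟩, hnot⟩
    have hrA : r ∈ ⋃ m ≤ k, basicSeq R0 x' m := Set.mem_biUnion (le_refl k) hr
    rw [accum_eq] at hrA
    simp only [Set.mem_iUnion, Set.mem_setOf_eq] at hrA
    obtain ⟨z, hz, hrz⟩ := hrA
    have hzu : dist x z ≤ (k : ℝ) + 1 :=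
      le_trans (dist_triangle x x' z) (by linarith)
    have hzl : (k : ℝ) < dist x z := by
      by_contra h
      push_neg at h
      apply hnot
      have : r ∈ ⋃ y ∈ {y : D | dist x y ≤ (k : ℝ)}, R0 y :=
        Set.mem_biUnion (by exact h : z ∈ {z : D | dist x z ≤ (k : ℝ)}) hrz
      rw [← accum_eq] at this
      simpa using this
    exact ⟨⟨z, ⟨hzl, hzu⟩, hrz⟩, hnot⟩
end

section
/- Let f : D → 𝓡 be a strictly monotonic query function, i.e., for all x, y, z ∈ D with d̄(x,y) > d̄(x,z) one has d(f(x),f(y)) > d(f(x),f(z)), where d is a metric on 𝓡. Let {Rᵢˣ} be the basic set sequence generated by the purest initial family R₀ˣ := {f(x)}. Then for every x ∈ D and every integer i ≥ 1, Rᵢˣ = {f(y) : y ∈ D, i−1 < d̄(x,y) ≤ i}. -/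
/-- For a strictly monotonic query function `f`, the purest mechanism's layers
satisfy `R_i^x = {f y : i−1 < d̄(x,y) ≤ i}` for `i ≥ 1`. -/
theorem stmt_13 {D 𝓡 : Type*} [MetricSpace D] [MetricSpace 𝓡] (f : D → 𝓡)
    (hmono : ∀ x y z : D, dist x z < dist x y → dist (f x) (f z) < dist (f x) (f y)) :
    ∀ x : D, ∀ i : ℕ, 1 ≤ i →
      basicSeq (fun z : D => ({f z} : Set 𝓡)) x i =
        f '' {y : D | (i : ℝ) - 1 < dist x y ∧ dist x y ≤ (i : ℝ)} := by
  intro x i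
  induction i using Nat.strong_induction_on with
  | _ i IH =>
    intro hi
    obtain ⟨j, rfl⟩ : ∃ j, i = j + 1 := ⟨i - 1, (Nat.succ_pred_eq_of_pos hi).symm⟩
    -- bound on earlier layers
    have hsub : ∀ k ≤ j, basicSeq (fun z : D => ({f z} : Set 𝓡)) x k ⊆
        f '' {z : D | dist x z ≤ (j : ℝ)} := by
      intro k hk r hr
      match k, hk with
      | 0, _ =>
        refine ⟨x, ?_, ?_⟩
        · simp [Set.mem_setOf_eq, Nat.cast_nonneg]
        · simp only [basicSeq, Set.mem_singleton_iff] at hr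
          exact hr.symm
      | k + 1, hk =>
        rw [IH (k + 1) (Nat.lt_succ_of_le hk) (Nat.le_add_left 1 k)] at hr
        obtain ⟨z, hz, rfl⟩ := hr
        refine ⟨z, ?_, rfl⟩
        have : ((k : ℝ) + 1) ≤ (j : ℝ) := by exact_mod_cast hk
        exact le_trans hz.2 (by push_cast; linarith)
    have hann : ({y : D | ((j + 1 : ℕ) : ℝ) - 1 < dist x y ∧ dist x y ≤ ((j + 1 : ℕ) : ℝ)})
        = {y : D | (j : ℝ) < dist x y ∧ dist x y ≤ (j : ℝ) + 1} := by
      ext y; push_cast; simp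
    rw [basicSeq, hann]
    have himg : (⋃ y ∈ {y : D | (j : ℝ) < dist x y ∧ dist x y ≤ (j : ℝ) + 1},
        ({f y} : Set 𝓡)) = f '' {y : D | (j : ℝ) < dist x y ∧ dist x y ≤ (j : ℝ) + 1} := by
      ext r
      simp [Set.mem_image, eq_comm]
    rw [himg]
    rw [sdiff_eq_left.mpr]
    rw [Set.disjoint_left]
    rintro r hrS hrA
    obtain ⟨y, hy, rfl⟩ := hrS
    simp only [Set.mem_iUnion] at hrA
    obtain ⟨k, hk, hrk⟩ := hrA
    obtain ⟨z, hz, hfz⟩ := hsub k hk hrk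
    have hlt : dist x z < dist x y := lt_of_le_of_lt hz hy.1
    have := hmono x y z hlt
    rw [hfz] at this
    exact lt_irrefl _ this
end

section
/- Let f : D → 𝓡 be surjective, and let {Rᵢˣ} be the basic set sequence generated by the purest initial family R₀ˣ := {f(x)}, with layer function L. Fix x₀, y₀ ∈ D and set r₀ := f(y₀), assuming f(x₀) ≠ r₀. Let {R̄ᵢˣ} be the basic set sequence generated by the modified initial family R̄₀^{x₀} := {f(x₀), r₀} and R̄₀ˣ := {f(x)} for x ≠ x₀, with layer function L̄. Then for every x ∈ D: (1) for every y ∈ D with f(y) ≠ r₀, L̄ˣ(f(y)) = Lˣ(f(y)); and (2) L̄ˣ(r₀) = min(⌈d̄(x₀,x)⌉, Lˣ(r₀)), where ⌈·⌉ is the ceiling function. -/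
/-- The "shell condition" at index `i`. -/
def shellCond {D 𝓡 : Type*} [PseudoMetricSpace D] (R0 : D → Set 𝓡) (x : D) (r : 𝓡) :
    ℕ → Prop
  | 0 => r ∈ R0 x
  | i + 1 => ∃ y, ((i : ℝ) < dist x y ∧ dist x y ≤ (i : ℝ) + 1) ∧ r ∈ R0 y

lemma exists_min_nat {P : ℕ → Prop} (h : ∃ k, P k) : ∃ k, P k ∧ ∀ j < k, ¬ P j := by
  classical
  exact ⟨Nat.find h, Nat.find_spec h, fun j hj => Nat.find_min h hj⟩

lemma mem_basicSeq_iff {D 𝓡 : Type*} [PseudoMetricSpace D] (R0 : D → Set 𝓡) (x : D)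
    (r : 𝓡) : ∀ i, r ∈ basicSeq R0 x i ↔
      shellCond R0 x r i ∧ ∀ j < i, ¬ shellCond R0 x r j := by
  intro i
  induction i using Nat.strong_induction_on with
  | _ i ih =>
    match i with
    | 0 => simp [basicSeq, shellCond]
    | i + 1 =>
      have hU : r ∈ (⋃ y ∈ {y : D | (i : ℝ) < dist x y ∧ dist x y ≤ (i : ℝ) + 1}, R0 y) ↔
          shellCond R0 x r (i + 1) := by
        simp [shellCond]
      have hA : r ∈ (⋃ k ≤ i, basicSeq R0 x k) ↔ ∃ k ≤ i, shellCond R0 x r k := by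
        simp only [Set.mem_iUnion, exists_prop]
        constructor
        · rintro ⟨k, hk, hm⟩
          exact ⟨k, hk, ((ih k (Nat.lt_succ_of_le hk)).1 hm).1⟩
        · rintro ⟨k, hk, hc⟩
          obtain ⟨k', hk', hmin⟩ := exists_min_nat ⟨k, hc⟩
          have hk'k : k' ≤ k := le_of_not_gt fun h => hmin k h hc
          have hk'le : k' ≤ i := le_trans hk'k hk
          exact ⟨k', hk'le, (ih k' (Nat.lt_succ_of_le hk'le)).2 ⟨hk', hmin⟩⟩
      have hdef : basicSeq R0 x (i + 1) =
          (⋃ y ∈ {y : D | (i : ℝ) < dist x y ∧ dist x y ≤ (i : ℝ) + 1}, R0 y) \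
            ⋃ k ≤ i, basicSeq R0 x k := by
        simp only [basicSeq]
      rw [hdef, Set.mem_diff, hU]
      rw [show (r ∉ ⋃ k ≤ i, basicSeq R0 x k) ↔ ¬∃ k ≤ i, shellCond R0 x r k from not_congr hA]
      constructor
      · rintro ⟨h1, h2⟩
        refine ⟨h1, fun j hj hc => h2 ⟨j, Nat.lt_succ_iff.mp hj, hc⟩⟩
      · rintro ⟨h1, h2⟩
        exact ⟨h1, fun ⟨k, hk, hc⟩ => h2 k (Nat.lt_succ_of_le hk) hc⟩

lemma basicSeq_layer_unique {D 𝓡 : Type*} [PseudoMetricSpace D] (R0 : D → Set 𝓡)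
    (x : D) (r : 𝓡) {i j : ℕ} (hi : r ∈ basicSeq R0 x i) (hj : r ∈ basicSeq R0 x j) :
    i = j := by
  rcases (mem_basicSeq_iff R0 x r i).1 hi with ⟨hci, hmi⟩
  rcases (mem_basicSeq_iff R0 x r j).1 hj with ⟨hcj, hmj⟩
  rcases lt_trichotomy i j with h | h | h
  · exact absurd hci (hmj i h)
  · exact h
  · exact absurd hcj (hmi j h)

/-- Layer change when one point `r₀ = f y₀` is added to the initial layer of one
dataset `x₀` of the purest mechanism: the layer of every other value is
unchanged, and the layer of `r₀` at `x` becomes `min(⌈d̄(x₀,x)⌉, Lˣ(r₀))`. -/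
theorem stmt_14 {D 𝓡 : Type*} [MetricSpace D] (f : D → 𝓡)
    (hf : Function.Surjective f)
    (x₀ y₀ : D) (hne : f x₀ ≠ f y₀)
    (L : D → 𝓡 → ℕ)
    (hL : ∀ (x : D) (r : 𝓡), r ∈ basicSeq (fun z : D => ({f z} : Set 𝓡)) x (L x r))
    (R0' : D → Set 𝓡)
    (hR0'x₀ : R0' x₀ = {f x₀, f y₀})
    (hR0' : ∀ x : D, x ≠ x₀ → R0' x = {f x})
    (L' : D → 𝓡 → ℕ)
    (hL' : ∀ (x : D) (r : 𝓡), r ∈ basicSeq R0' x (L' x r)) :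
    ∀ x : D,
      (∀ y : D, f y ≠ f y₀ → L' x (f y) = L x (f y)) ∧
      L' x (f y₀) = min ⌈dist x₀ x⌉₊ (L x (f y₀)) := by
  set P : D → Set 𝓡 := fun z : D => ({f z} : Set 𝓡) with hP
  -- pointwise descriptions of the modified initial family
  have hmemR0' : ∀ (r : 𝓡), r ≠ f y₀ → ∀ z : D, (r ∈ R0' z ↔ r ∈ P z) := by
    intro r hr z
    by_cases hz : z = x₀
    · subst hz
      rw [hR0'x₀]
      simp only [Set.mem_insert_iff, Set.mem_singleton_iff, hP]
      constructor
      · rintro (h | h)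
        · exact h
        · exact absurd h hr
      · exact Or.inl
    · rw [hR0' z hz]
  have hmemR0'y₀ : ∀ z : D, (f y₀ ∈ R0' z ↔ z = x₀ ∨ f z = f y₀) := by
    intro z
    by_cases hz : z = x₀
    · subst hz
      rw [hR0'x₀]
      simp
    · rw [hR0' z hz]
      simp [hz, eq_comm]
  intro x
  constructor
  · -- part 1
    intro y hy
    have hcond : ∀ i, shellCond R0' x (f y) i ↔ shellCond P x (f y) i := by
      intro i
      match i with
      | 0 => exact hmemR0' (f y) hy x
      | i + 1 =>
        constructor <;> rintro ⟨z, hz, hm⟩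
        · exact ⟨z, hz, (hmemR0' (f y) hy z).1 hm⟩
        · exact ⟨z, hz, (hmemR0' (f y) hy z).2 hm⟩
    have h1 : f y ∈ basicSeq P x (L' x (f y)) := by
      rw [mem_basicSeq_iff]
      rcases (mem_basicSeq_iff R0' x (f y) _).1 (hL' x (f y)) with ⟨hc, hm⟩
      exact ⟨(hcond _).1 hc, fun j hj hcj => hm j hj ((hcond j).2 hcj)⟩
    exact basicSeq_layer_unique P x (f y) h1 (hL x (f y))
  · -- part 2
    set r₀ := f y₀
    set m := ⌈dist x x₀⌉₊ with hm
    set n := L x r₀ with hn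
    rcases (mem_basicSeq_iff P x r₀ n).1 (hL x r₀) with ⟨hcn, hmn⟩
    have hsP : ∀ z : D, r₀ ∈ P z ↔ f z = r₀ := fun z => by simp [hP, eq_comm]
    -- shell condition for r₀ in the modified family
    have hcond : ∀ i, shellCond R0' x r₀ i ↔ (i = m ∨ shellCond P x r₀ i) := by
      intro i
      match i with
      | 0 =>
        have hx : x = x₀ ↔ 0 = m := by
          constructor
          · intro h; subst h; simp [hm]
          · intro h
            exact dist_le_zero.mp (Nat.ceil_eq_zero.mp h.symm)
        show r₀ ∈ R0' x ↔ _
        rw [hmemR0'y₀ x]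
        have hs0 : shellCond P x r₀ 0 ↔ f x = r₀ := hsP x
        rw [hs0, hx]
      | i + 1 =>
        have hdist : ((i : ℝ) < dist x x₀ ∧ dist x x₀ ≤ (i : ℝ) + 1) ↔ i + 1 = m := by
          rw [hm, eq_comm, Nat.ceil_eq_iff (Nat.succ_ne_zero i)]
          push_cast
          simp
        constructor
        · rintro ⟨z, hz, hmem⟩
          rcases (hmemR0'y₀ z).1 hmem with hz0 | hfz
          · subst hz0; exact Or.inl (hdist.1 hz)
          · exact Or.inr ⟨z, hz, (hsP z).2 hfz⟩
        · rintro (h | ⟨z, hz, hfz⟩)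
          · exact ⟨x₀, hdist.2 h, (hmemR0'y₀ x₀).2 (Or.inl rfl)⟩
          · exact ⟨z, hz, (hmemR0'y₀ z).2 (Or.inr ((hsP z).1 hfz))⟩
    -- r₀ lies in layer min m n of the modified sequence
    have hmem : r₀ ∈ basicSeq R0' x (min m n) := by
      rw [mem_basicSeq_iff]
      constructor
      · rw [hcond]
        rcases le_total m n with h | h
        · left; rw [min_eq_left h]
        · right; rw [min_eq_right h]; exact hcn
      · intro j hj
        rw [hcond]
        push_neg
        exact ⟨Nat.ne_of_lt (lt_of_lt_of_le hj (min_le_left _ _)),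
          hmn j (lt_of_lt_of_le hj (min_le_right _ _))⟩
    have := basicSeq_layer_unique R0' x r₀ (hL' x r₀) hmem
    rw [this, hm, hn, dist_comm]
end

section
/- Let f : D → 𝓡 and let {R₀ˣ : x ∈ D} be an initial family with ∪_{x∈D} R₀ˣ = 𝓡, generating the basic set sequence {Rᵢˣ} with layer function L. Fix x₀, y₀ ∈ D and set r₀ := f(y₀), assuming f(x₀) ≠ r₀ and r₀ ∉ R₀^{x₀}. Let {R̄ᵢˣ} be the basic set sequence generated by the modified initial family R̄₀^{x₀} := R₀^{x₀} ∪ {r₀} and R̄₀ˣ := R₀ˣ for x ≠ x₀, with layer function L̄. Then for every x ∈ D: (1) for every y ∈ D with f(y) ≠ r₀, L̄ˣ(f(y)) = Lˣ(f(y)); and (2) L̄ˣ(r₀) = min(⌈d̄(x₀,x)⌉, Lˣ(r₀)), where ⌈·⌉ is the ceiling function. -/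
lemma basicSeq_unique {D 𝓡 : Type*} [PseudoMetricSpace D] (R0 : D → Set 𝓡) (x : D)
    {r : 𝓡} {i j : ℕ} (hi : r ∈ basicSeq R0 x i) (hj : r ∈ basicSeq R0 x j) : i = j := by
  rcases lt_trichotomy i j with h | h | h
  · obtain ⟨j', rfl⟩ := Nat.exists_eq_add_of_lt h
    rw [basicSeq] at hj
    exact absurd (Set.mem_iUnion₂.mpr ⟨i, by omega, hi⟩) hj.2
  · exact h
  · obtain ⟨i', rfl⟩ := Nat.exists_eq_add_of_lt h
    rw [basicSeq] at hi
    exact absurd (Set.mem_iUnion₂.mpr ⟨j, by omega, hj⟩) hi.2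

lemma ceil_dist_succ_iff {D : Type*} [MetricSpace D] (x₀ x : D) (i : ℕ) :
    ⌈dist x₀ x⌉₊ = i + 1 ↔ ((i : ℝ) < dist x x₀ ∧ dist x x₀ ≤ (i : ℝ) + 1) := by
  rw [dist_comm x x₀]
  constructor
  · intro h
    constructor
    · have := Nat.lt_ceil (n := i) (a := dist x₀ x)
      rw [h] at this
      exact this.mp (by omega)
    · have := Nat.ceil_le.mp h.le
      push_cast at this
      linarith
  · rintro ⟨h1, h2⟩
    have l1 : i < ⌈dist x₀ x⌉₊ := Nat.lt_ceil.mpr h1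
    have l2 : ⌈dist x₀ x⌉₊ ≤ i + 1 := Nat.ceil_le.mpr (by exact_mod_cast h2)
    omega

lemma key_lemma {D 𝓡 : Type*} [MetricSpace D] (R0 R0' : D → Set 𝓡) (x₀ : D) (r₀ : 𝓡)
    (hr₀ : r₀ ∉ R0 x₀)
    (hR0'x₀ : R0' x₀ = R0 x₀ ∪ {r₀})
    (hR0' : ∀ x, x ≠ x₀ → R0' x = R0 x)
    (x : D) (ℓ : ℕ) (hℓ : r₀ ∈ basicSeq R0 x ℓ) :
    ∀ i : ℕ, (∀ r : 𝓡, r ≠ r₀ → (r ∈ basicSeq R0' x i ↔ r ∈ basicSeq R0 x i)) ∧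
      (r₀ ∈ basicSeq R0' x i ↔ i = min ⌈dist x₀ x⌉₊ ℓ) := by
  have huniq : ∀ i, r₀ ∈ basicSeq R0 x i → i = ℓ :=
    fun i hi => basicSeq_unique R0 x hi hℓ
  set m := ⌈dist x₀ x⌉₊ with hm
  have hR0'ne : ∀ y, ∀ r : 𝓡, r ≠ r₀ → (r ∈ R0' y ↔ r ∈ R0 y) := by
    intro y r hr
    rcases eq_or_ne y x₀ with rfl | hy
    · rw [hR0'x₀]; simp [hr]
    · rw [hR0' y hy]
  intro i
  induction i using Nat.strong_induction_on with
  | _ i IH =>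
    match i with
    | 0 =>
      have e0 : ∀ (S : D → Set 𝓡) (r : 𝓡), r ∈ basicSeq S x 0 ↔ r ∈ S x := by
        intro S r; rw [basicSeq]
      constructor
      · intro r hr
        rw [e0, e0]
        exact hR0'ne x r hr
      · rw [e0]
        have hx₀ : (x = x₀) ↔ m = 0 := by
          rw [hm, Nat.ceil_eq_zero]
          constructor
          · rintro rfl; simp
          · intro h; have := dist_nonneg (x := x₀) (y := x)
            have : dist x₀ x = 0 := le_antisymm h this
            exact (dist_eq_zero.mp this).symm
        have hR0x : r₀ ∈ R0 x ↔ ℓ = 0 := by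
          constructor
          · intro h; exact (huniq 0 ((e0 R0 r₀).mpr h)).symm
          · rintro rfl; exact (e0 R0 r₀).mp hℓ
        constructor
        · intro h
          rcases eq_or_ne x x₀ with rfl | hx
          · have hm0 : m = 0 := hx₀.mp rfl
            omega
          · rw [hR0' x hx] at h
            have := hR0x.mp h
            omega
        · intro h
          rcases Nat.min_eq_zero_iff.mp h.symm with h0 | h0
          · have : x = x₀ := hx₀.mpr h0
            subst this
            rw [hR0'x₀]; right; rfl
          · have : r₀ ∈ R0 x := hR0x.mpr h0
            rcases eq_or_ne x x₀ with rfl | hx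
            · exact absurd this hr₀
            · rw [hR0' x hx]; exact this
    | i + 1 =>
      -- memberships in A_i / A'_i
      have hA' : r₀ ∈ (⋃ k ≤ i, basicSeq R0' x k) ↔ min m ℓ ≤ i := by
        simp only [Set.mem_iUnion, exists_prop]
        constructor
        · rintro ⟨k, hk, hmem⟩
          have := ((IH k (by omega)).2).mp hmem
          omega
        · intro h
          exact ⟨min m ℓ, h, ((IH (min m ℓ) (by omega)).2).mpr rfl⟩
      have hA : r₀ ∈ (⋃ k ≤ i, basicSeq R0 x k) ↔ ℓ ≤ i := by
        simp only [Set.mem_iUnion, exists_prop]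
        constructor
        · rintro ⟨k, hk, hmem⟩
          have := huniq k hmem
          omega
        · intro h
          exact ⟨ℓ, h, hℓ⟩
      constructor
      · intro r hr
        rw [basicSeq, basicSeq]
        have hU : r ∈ (⋃ y ∈ {y : D | (i : ℝ) < dist x y ∧ dist x y ≤ (i : ℝ) + 1}, R0' y) ↔
            r ∈ (⋃ y ∈ {y : D | (i : ℝ) < dist x y ∧ dist x y ≤ (i : ℝ) + 1}, R0 y) := by
          simp only [Set.mem_iUnion, exists_prop]
          constructor
          · rintro ⟨y, hy, hmem⟩; exact ⟨y, hy, (hR0'ne y r hr).mp hmem⟩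
          · rintro ⟨y, hy, hmem⟩; exact ⟨y, hy, (hR0'ne y r hr).mpr hmem⟩
        have hAr : r ∈ (⋃ k ≤ i, basicSeq R0' x k) ↔ r ∈ (⋃ k ≤ i, basicSeq R0 x k) := by
          simp only [Set.mem_iUnion, exists_prop]
          constructor
          · rintro ⟨k, hk, hmem⟩; exact ⟨k, hk, ((IH k (by omega)).1 r hr).mp hmem⟩
          · rintro ⟨k, hk, hmem⟩; exact ⟨k, hk, ((IH k (by omega)).1 r hr).mpr hmem⟩
        constructor
        · rintro ⟨h1, h2⟩; exact ⟨hU.mp h1, fun h => h2 (hAr.mpr h)⟩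
        · rintro ⟨h1, h2⟩; exact ⟨hU.mpr h1, fun h => h2 (hAr.mp h)⟩
      · rw [basicSeq]
        constructor
        · rintro ⟨h1, h2⟩
          have hgt : i < min m ℓ := by
            by_contra h
            exact h2 (hA'.mpr (by omega))
          simp only [Set.mem_iUnion, exists_prop, Set.mem_setOf_eq] at h1
          obtain ⟨y, hy, hmem⟩ := h1
          by_cases hney : y = x₀
          · subst hney
            have : m = i + 1 := (ceil_dist_succ_iff _ x i).mpr hy
            omega
          · rw [hR0' y hney] at hmem
            -- r₀ ∈ U_{i+1}; show r₀ ∈ B_{i+1}, hence ℓ = i+1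
            have hnotA : r₀ ∉ ⋃ k ≤ i, basicSeq R0 x k := fun h => by
              have := hA.mp h; omega
            have : r₀ ∈ basicSeq R0 x (i + 1) := by
              rw [basicSeq]
              exact ⟨Set.mem_biUnion hy hmem, hnotA⟩
            have := huniq _ this
            omega
        · intro h
          have hnotA' : r₀ ∉ ⋃ k ≤ i, basicSeq R0' x k := fun hh => by
            have := hA'.mp hh; omega
          refine ⟨?_, hnotA'⟩
          rcases eq_or_ne m (i + 1) with hm1 | hm1
          · have hy : (i : ℝ) < dist x x₀ ∧ dist x x₀ ≤ (i : ℝ) + 1 :=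
              (ceil_dist_succ_iff x₀ x i).mp hm1
            have : r₀ ∈ R0' x₀ := by rw [hR0'x₀]; right; rfl
            exact Set.mem_biUnion hy this
          · have hℓ1 : ℓ = i + 1 := by omega
            rw [hℓ1, basicSeq] at hℓ
            obtain ⟨h1, _⟩ := hℓ
            simp only [Set.mem_iUnion, exists_prop, Set.mem_setOf_eq] at h1
            obtain ⟨y, hy, hmem⟩ := h1
            by_cases hney : y = x₀
            · subst hney; exact absurd hmem hr₀
            · rw [← hR0' y hney] at hmem
              exact Set.mem_biUnion hy hmem

/-- Layer change when one point `r₀ = f y₀` is added to the initial layer of one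
dataset `x₀` of a basic mechanism whose initial family covers `𝓡`: the layer of
every other value is unchanged, and the layer of `r₀` at `x` becomes
`min(⌈d̄(x₀,x)⌉, Lˣ(r₀))`. -/
theorem stmt_15 {D 𝓡 : Type*} [MetricSpace D] (f : D → 𝓡)
    (R0 : D → Set 𝓡) (hcover : (⋃ x : D, R0 x) = Set.univ)
    (x₀ y₀ : D) (hne : f x₀ ≠ f y₀) (hr₀ : f y₀ ∉ R0 x₀)
    (L : D → 𝓡 → ℕ)
    (hL : ∀ (x : D) (r : 𝓡), r ∈ basicSeq R0 x (L x r))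
    (R0' : D → Set 𝓡)
    (hR0'x₀ : R0' x₀ = R0 x₀ ∪ {f y₀})
    (hR0' : ∀ x : D, x ≠ x₀ → R0' x = R0 x)
    (L' : D → 𝓡 → ℕ)
    (hL' : ∀ (x : D) (r : 𝓡), r ∈ basicSeq R0' x (L' x r)) :
    ∀ x : D,
      (∀ y : D, f y ≠ f y₀ → L' x (f y) = L x (f y)) ∧
      L' x (f y₀) = min ⌈dist x₀ x⌉₊ (L x (f y₀)) := by
  intro x
  have key := key_lemma R0 R0' x₀ (f y₀) hr₀ hR0'x₀ hR0' x (L x (f y₀)) (hL x (f y₀))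
  constructor
  · intro y hy
    have h1 := ((key (L' x (f y))).1 (f y) hy).mp (hL' x (f y))
    exact basicSeq_unique R0 x h1 (hL x (f y))
  · exact ((key (L' x (f y₀))).2).mp (hL' x (f y₀))
end

section
/- Let F : ℝⁿ → ℝᵈ be a surjective linear map, where ℝⁿ is equipped with the ℓ¹-norm ‖·‖₁. Let K := F(B), where B := {u ∈ ℝⁿ : ‖u‖₁ ≤ 1}, and let ‖s‖_K denote the Minkowski gauge of K at s, i.e., inf{t > 0 : s ∈ t·K}. Then for every x ∈ ℝⁿ and every i ∈ ℕ, {r ∈ ℝᵈ : ‖F(x) − r‖_K < i + 1} = ∪_{y∈ℝⁿ : ‖x−y‖₁ ≤ i} {r ∈ ℝᵈ : ‖F(y) − r‖_K < 1}. (In the paper's terminology, the cumulative layer sets A_iˣ of the K-norm mechanism satisfy A_iˣ = ∪_{y : ‖x−y‖₁ ≤ i} A₀ʸ, so the K-norm mechanism is a basic mechanism.) -/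
/-!
Since `F` is surjective, `‖F w‖_K < c` holds exactly when `F w = F w'` for some `w'` with
`‖w'‖₁ < c`: the gauge of `K` is the quotient seminorm of `‖·‖₁`. So `‖F x − r‖_K < i + 1` gives
`F x − r = F w` with `‖w‖₁ < i + 1`; cutting `w` on the segment `[0, w]` into `z + (w − z)` with
`‖z‖₁ ≤ i` and `‖w − z‖₁ < 1` and taking `y = x − z` proves `⊆`. The triangle inequality
proves `⊇`.
-/

open Finset Set Pointwise

theorem absorbent_image_of_surjective {R E G : Type*} [Semiring R] [Bornology R]
    [AddCommMonoid E] [Module R E] [AddCommMonoid G] [Module R G] {F : E →ₗ[R] G}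
    (hF : Function.Surjective F) {s : Set E} (hs : Absorbent R s) : Absorbent R (F '' s) := by
  intro y
  obtain ⟨x, rfl⟩ := hF y
  filter_upwards [hs x] with a ha
  rw [← image_smul_set, ← image_singleton]
  exact image_mono ha

namespace Seminorm

variable {E G : Type*} [AddCommGroup E] [Module ℝ E] [AddCommGroup G] [Module ℝ G]
  (p : Seminorm ℝ E) {F : E →ₗ[ℝ] G}

theorem exists_le_sub_lt_of_lt_add {w : E} {a b : ℝ} (ha : 0 ≤ a) (hb : 0 < b)
    (h : p w < a + b) : ∃ z, p z ≤ a ∧ p (w - z) < b := by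
  rcases le_or_gt (p w) a with hwa | hwa
  · exact ⟨w, hwa, by simpa using hb⟩
  have hw : 0 < p w := ha.trans_lt hwa
  set c := a / p w
  have hc0 : 0 ≤ c := div_nonneg ha hw.le
  have hc1 : c ≤ 1 := (div_le_one hw).2 hwa.le
  refine ⟨c • w, ?_, ?_⟩
  · rw [map_smul_eq_mul, Real.norm_of_nonneg hc0, div_mul_cancel₀ _ hw.ne']
  · rw [show w - c • w = (1 - c) • w by rw [sub_smul, one_smul], map_smul_eq_mul,
      Real.norm_of_nonneg (sub_nonneg.2 hc1), sub_mul, one_mul, div_mul_cancel₀ _ hw.ne']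
    linarith

theorem gauge_image_closedBall_apply_le (F : E →ₗ[ℝ] G) (w : E) :
    gauge (F '' p.closedBall 0 1) (F w) ≤ p w := by
  refine le_of_forall_gt_imp_ge_of_dense fun t ht => ?_
  have ht0 : 0 < t := (apply_nonneg p w).trans_lt ht
  refine gauge_le_of_mem ht0.le ?_
  rw [← image_smul_set, p.smul_closedBall_zero (by simpa using ht0.ne')]
  refine mem_image_of_mem F ?_
  rw [mem_closedBall_zero, Real.norm_of_nonneg ht0.le, mul_one]
  exact ht.le

theorem gauge_image_closedBall_lt_iff (hF : Function.Surjective F) {s : G} {c : ℝ} :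
    gauge (F '' p.closedBall 0 1) s < c ↔ ∃ w, F w = s ∧ p w < c := by
  constructor
  · intro h
    have hK : Absorbent ℝ (F '' p.closedBall 0 1) :=
      absorbent_image_of_surjective hF (p.absorbent_closedBall_zero one_pos)
    obtain ⟨b, hb0, hbc, hs⟩ := exists_lt_of_gauge_lt hK h
    rw [← image_smul_set, p.smul_closedBall_zero (by simpa using hb0.ne')] at hs
    obtain ⟨w, hw, rfl⟩ := hs
    rw [mem_closedBall_zero, Real.norm_of_nonneg hb0.le, mul_one] at hw
    exact ⟨w, rfl, hw.trans_lt hbc⟩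
  · rintro ⟨w, rfl, hw⟩
    exact (p.gauge_image_closedBall_apply_le F w).trans_lt hw

theorem gauge_image_closedBall_sub_lt_add_one_iff (hF : Function.Surjective F) {a : ℝ}
    (ha : 0 ≤ a) (x : E) (r : G) :
    gauge (F '' p.closedBall 0 1) (F x - r) < a + 1 ↔
      ∃ y, p (x - y) ≤ a ∧ gauge (F '' p.closedBall 0 1) (F y - r) < 1 := by
  simp only [p.gauge_image_closedBall_lt_iff hF]
  constructor
  · rintro ⟨w, hw, hwa⟩
    obtain ⟨z, hz, hwz⟩ := p.exists_le_sub_lt_of_lt_add ha one_pos hwa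
    refine ⟨x - z, by simpa using hz, w - z, ?_, hwz⟩
    rw [map_sub, map_sub, hw]
    abel
  · rintro ⟨y, hy, w, hw, hw1⟩
    refine ⟨x - y + w, by rw [map_add, map_sub, hw]; abel, ?_⟩
    exact (map_add_le_add p _ _).trans_lt (add_lt_add_of_le_of_lt hy hw1)

end Seminorm

def l1Seminorm (ι : Type*) [Fintype ι] : Seminorm ℝ (ι → ℝ) :=
  Seminorm.of (fun u => ∑ j, |u j|)
    (fun u v => (sum_le_sum fun j _ => abs_add_le (u j) (v j)).trans_eq sum_add_distrib)
    (fun a u => by simp only [Pi.smul_apply, smul_eq_mul, abs_mul, Real.norm_eq_abs, mul_sum])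

theorem l1Seminorm_apply {ι : Type*} [Fintype ι] (u : ι → ℝ) : l1Seminorm ι u = ∑ j, |u j| :=
  rfl

/-- The K-norm mechanism is a basic mechanism: for a surjective linear map
`F : ℝⁿ → ℝᵈ` with `K = F(B₁ⁿ)` the image of the closed `ℓ¹` unit ball and
`‖·‖_K` the Minkowski gauge of `K`, the cumulative layer sets satisfy
`{r : ‖F x − r‖_K < i + 1} = ∪_{y : ‖x−y‖₁ ≤ i} {r : ‖F y − r‖_K < 1}`. -/
theorem stmt_17 {n d : ℕ} (F : (Fin n → ℝ) →ₗ[ℝ] (Fin d → ℝ))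
    (hF : Function.Surjective F) :
    ∀ (x : Fin n → ℝ) (i : ℕ),
      {r : Fin d → ℝ |
          gauge (F '' {u : Fin n → ℝ | ∑ j, |u j| ≤ 1}) (F x - r) < (i : ℝ) + 1} =
        ⋃ y ∈ {y : Fin n → ℝ | ∑ j, |x j - y j| ≤ (i : ℝ)},
          {r : Fin d → ℝ |
            gauge (F '' {u : Fin n → ℝ | ∑ j, |u j| ≤ 1}) (F y - r) < 1} := by
  intro x i
  have hB : {u : Fin n → ℝ | ∑ j, |u j| ≤ 1} = (l1Seminorm (Fin n)).closedBall 0 1 := by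
    ext u
    rw [Seminorm.mem_closedBall_zero, l1Seminorm_apply, mem_ofPred_eq]
  ext r
  simp only [hB, mem_ofPred_eq, mem_iUnion, exists_prop,
    (l1Seminorm (Fin n)).gauge_image_closedBall_sub_lt_add_one_iff hF (Nat.cast_nonneg i),
    l1Seminorm_apply, Pi.sub_apply]
end

section
/- Let the discrete mechanism p be ε-differentially private, and suppose the normalizers of its discretization are all equal: αˣ = α^{x'} for all x, x' ∈ D (as holds by translation symmetry for the purest and δ-neighborhood discretizations of a linear query). Then the discretization q is ε-differentially private: for all neighbors x, x' ∈ D and every r ∈ 𝓡, qˣ(r) ≤ exp(ε) · q^{x'}(r). -/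
/-- If the discrete mechanism `p` is `ε`-differentially private and the
normalizers of its discretization are all equal, then the discretization `q`
itself is `ε`-differentially private. -/
theorem stmt_19 {D R : Type*} [MetricSpace D] [MetricSpace R] [Countable R]
    (p : D → R → ℝ) (ε : ℝ) (hε : 0 < ε)
    (hpos : ∀ (x : D) (r : R), 0 < p x r) (hsum1 : ∀ x : D, HasSum (p x) 1)
    (M : ℝ) (hMpos : 0 < M)
    (hM : IsLUB {v : ℝ | ∃ (x : D) (r : R), v = p x r} M)
    (hdp : IsDP p ε)
    (L : D → R → ℕ) (hL : ∀ (x : D) (r : R), r ∈ layerSet p ε M x (L x r))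
    (α : D → ℝ) (hα : ∀ x : D, HasSum (fun r : R => Real.exp (-(L x r : ℝ) * ε)) (α x))
    (hαpos : ∀ x : D, 0 < α x)
    (hαeq : ∀ x x' : D, α x = α x') :
    ∀ x x' : D, 0 < dist x x' → dist x x' ≤ 1 → ∀ r : R,
      Real.exp (-(L x r : ℝ) * ε) / α x ≤
        Real.exp ε * (Real.exp (-(L x' r : ℝ) * ε) / α x') := by
  intro x x' hd0 hd1 r
  have hxr := hL x r
  have hx'r := hL x' r
  obtain ⟨h1, h2⟩ := hxr
  obtain ⟨h3, h4⟩ := hx'r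
  -- p x r ≤ exp ε * p x' r
  have hdp' := hdp x x' hd0 hd1 r
  -- M * exp(-(L x r + 1)ε) < p x r ≤ exp ε * p x' r ≤ exp ε * M * exp(-(L x' r)ε)
  have key : M * Real.exp (-((L x r : ℝ) + 1) * ε) < Real.exp ε * (M * Real.exp (-(L x' r : ℝ) * ε)) := by
    calc M * Real.exp (-((L x r : ℝ) + 1) * ε) < p x r := h1
      _ ≤ Real.exp ε * p x' r := hdp'
      _ ≤ Real.exp ε * (M * Real.exp (-(L x' r : ℝ) * ε)) := by
          exact mul_le_mul_of_nonneg_left h4 (Real.exp_pos ε).le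
  have key2 : Real.exp (-((L x r : ℝ) + 1) * ε) < Real.exp (ε + -(L x' r : ℝ) * ε) := by
    rw [Real.exp_add]
    have := (mul_lt_mul_iff_right₀ hMpos).mp (by linarith [key] : M * Real.exp (-((L x r : ℝ) + 1) * ε) < M * (Real.exp ε * Real.exp (-(L x' r : ℝ) * ε)))
    linarith
  have hlt : -((L x r : ℝ) + 1) * ε < ε + -(L x' r : ℝ) * ε := Real.exp_lt_exp.mp key2
  -- so (L x' r : ℝ) < L x r + 2, hence L x' r ≤ L x r + 1
  have hL' : (L x' r : ℝ) ≤ (L x r : ℝ) + 1 := by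
    have : (L x' r : ℝ) < (L x r : ℝ) + 2 := by
      nlinarith [hε]
    have h6 : (L x' r : ℝ) < ((L x r + 2 : ℕ) : ℝ) := by push_cast; linarith
    have h5 : L x' r < L x r + 2 := by exact_mod_cast h6
    have : L x' r ≤ L x r + 1 := by omega
    exact_mod_cast this
  have hexp : Real.exp (-(L x r : ℝ) * ε) ≤ Real.exp (ε + -(L x' r : ℝ) * ε) := by
    apply Real.exp_le_exp.mpr
    nlinarith
  rw [hαeq x x']
  rw [div_le_iff₀ (hαpos x')]
  calc Real.exp (-(L x r : ℝ) * ε) ≤ Real.exp (ε + -(L x' r : ℝ) * ε) := hexp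
    _ = Real.exp ε * Real.exp (-(L x' r : ℝ) * ε) := Real.exp_add _ _
    _ = Real.exp ε * (Real.exp (-(L x' r : ℝ) * ε) / α x') * α x' := by
        rw [mul_assoc, div_mul_cancel₀ _ (hαpos x').ne']
end
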